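/- Let Δ be a simplicial complex on vertex set [n] = {1,…,n} with facets F_1,…,F_r, and let Γ ⊆ ℕ_∞^n be the multicomplex whose set of facets is {a_{F_1},…,a_{F_r}}. Then Δ is k-decomposable if and only if Γ is k-decomposable. -/

import Mathlib

open MvPolynomial

noncomputable section

namespace Arxiv1703

variable {K : Type*} [Field K] {σ : Type*}

/-- `I` is a monomial ideal: generated by a set of monomials. -/
def IsMonomialIdeal (I : Ideal (MvPolynomial σ K)) : Prop :=
  ∃ G : Set (σ →₀ ℕ),
    I = Ideal.span ((fun a => (monomial a 1 : MvPolynomial σ K)) '' G)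

/-- `ass I = Ass (S/I)`, the associated primes of `S/I`. -/
def ass (I : Ideal (MvPolynomial σ K)) : Set (Ideal (MvPolynomial σ K)) :=
  associatedPrimes (MvPolynomial σ K) (MvPolynomial σ K ⧸ I)

/-- the minimal members (under inclusion) of a set of ideals. -/
def minSet (A : Set (Ideal (MvPolynomial σ K))) : Set (Ideal (MvPolynomial σ K)) :=
  {P | P ∈ A ∧ ∀ Q ∈ A, Q ≤ P → Q = P}

/-- `u` is a pretty cleaner monomial of `I`. -/
def IsPrettyCleaner (I : Ideal (MvPolynomial σ K)) (u : MvPolynomial σ K) : Prop :=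
  ∀ P ∈ ass (I.colon (Ideal.span {u})), ∀ Q ∈ ass (I ⊔ Ideal.span {u}), P ≤ Q → P = Q

/-- `u` is a cleaner monomial of `I`: `min(ass(I + Su)) ⊆ min(ass I)`. -/
def IsCleaner (I : Ideal (MvPolynomial σ K)) (u : MvPolynomial σ K) : Prop :=
  minSet (ass (I ⊔ Ideal.span {u})) ⊆ minSet (ass I)

/-- `I` is pretty `k`-clean (well-founded recursive definition, as inductive predicate). -/
inductive PrettyKClean (k : ℕ) : Ideal (MvPolynomial σ K) → Prop
  | prime (I : Ideal (MvPolynomial σ K)) (h : I.IsPrime) : PrettyKClean k I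
  | step (I : Ideal (MvPolynomial σ K)) (a : σ →₀ ℕ) (ha : a ≠ 0)
      (hu : (monomial a 1 : MvPolynomial σ K) ∉ I)
      (hsupp : a.support.card ≤ k + 1)
      (hcl : IsPrettyCleaner I (monomial a 1))
      (h1 : PrettyKClean k (I.colon (Ideal.span {monomial a 1} : Ideal (MvPolynomial σ K))))
      (h2 : PrettyKClean k (I ⊔ Ideal.span {monomial a 1})) : PrettyKClean k I

/-- `I` is `k`-clean. -/
inductive KClean (k : ℕ) : Ideal (MvPolynomial σ K) → Prop
  | prime (I : Ideal (MvPolynomial σ K)) (h : I.IsPrime) : KClean k I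
  | step (I : Ideal (MvPolynomial σ K)) (a : σ →₀ ℕ) (ha : a ≠ 0)
      (hu : (monomial a 1 : MvPolynomial σ K) ∉ I)
      (hne : ass I = I.minimalPrimes)
      (hsupp : a.support.card ≤ k + 1)
      (hcl : IsCleaner I (monomial a 1))
      (h1 : KClean k (I.colon (Ideal.span {monomial a 1} : Ideal (MvPolynomial σ K))))
      (h2 : KClean k (I ⊔ Ideal.span {monomial a 1})) : KClean k I

/-- `I` is pretty clean: it admits a pretty clean prime filtration by monomial ideals. -/
def IsPrettyClean (I : Ideal (MvPolynomial σ K)) : Prop :=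
  ∃ (r : ℕ) (c : Fin (r + 1) → Ideal (MvPolynomial σ K))
    (P : Fin r → Ideal (MvPolynomial σ K)),
    c 0 = I ∧ c (Fin.last r) = ⊤ ∧
    (∀ i, IsMonomialIdeal (c i)) ∧
    (∀ i : Fin r, c i.castSucc < c i.succ) ∧
    (∀ i : Fin r, (P i).IsPrime) ∧
    (∀ i : Fin r, Nonempty
      ((↥(c i.succ) ⧸ Submodule.comap (Submodule.subtype (c i.succ)) (c i.castSucc))
        ≃ₗ[MvPolynomial σ K] (MvPolynomial σ K ⧸ P i))) ∧
    (∀ i j : Fin r, i < j → P i ≤ P j → P i = P j)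

/-! ### Multicomplexes -/

variable {ι : Type*}

/-- `Γ ⊆ ℕ∞^ι` is a multicomplex. -/
def IsMulticomplex (Γ : Set (ι → ENat)) : Prop :=
  (∀ a ∈ Γ, ∀ b ≤ a, b ∈ Γ) ∧
  (∀ a ∈ Γ, ∃ m ∈ Γ, a ≤ m ∧ ∀ c ∈ Γ, m ≤ c → m = c)

/-- `M(Γ)`, the maximal elements of `Γ`. -/
def maxElts (Γ : Set (ι → ENat)) : Set (ι → ENat) :=
  {m | m ∈ Γ ∧ ∀ c ∈ Γ, m ≤ c → m = c}

def infpt (a : ι → ENat) : Set ι := {i | a i = ⊤}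
def fpt (a : ι → ENat) : Set ι := {i | a i ≠ ⊤}
def fptStar (a : ι → ENat) : Set ι := {i | a i ≠ 0 ∧ a i ≠ ⊤}

/-- the facets of `Γ`. -/
def facets (Γ : Set (ι → ENat)) : Set (ι → ENat) :=
  {a | a ∈ Γ ∧ ∀ m ∈ maxElts Γ, a ≤ m → infpt a = infpt m}

/-- `⟨A⟩`, the smallest multicomplex containing `A` (the order ideal generated by `A`). -/
def mcSpan (A : Set (ι → ENat)) : Set (ι → ENat) := {b | ∃ a ∈ A, b ≤ a}

def star (Γ : Set (ι → ENat)) (a : ι → ENat) : Set (ι → ENat) :=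
  mcSpan {b | b ∈ facets Γ ∧ a ≤ b}

def del (Γ : Set (ι → ENat)) (a : ι → ENat) : Set (ι → ENat) :=
  mcSpan {b | b ∈ facets Γ ∧ ¬ a ≤ b}

def link (Γ : Set (ι → ENat)) (a : ι → ENat) : Set (ι → ENat) :=
  mcSpan ((fun b => b - a) '' {b | b ∈ facets Γ ∧ a ≤ b})

/-- view a vector of naturals as a face in `ℕ∞^ι`. -/
def natFace (a : ι → ℕ) : ι → ENat := fun i => (a i : ENat)

/-- `T` is a Stanley set of degree `a`, i.e. `T = a + ⟨m⟩` for some `m ∈ {0,∞}^ι`. -/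
def IsStanleySet (a : ι → ℕ) (T : Set (ι → ENat)) : Prop :=
  ∃ m : ι → ENat, (∀ i, m i = 0 ∨ m i = ⊤) ∧
    T = (fun b => natFace a + b) '' mcSpan {m}

/-- `a ∈ Γ ∩ ℕ^ι` is a shedding face of `Γ`. -/
def IsSheddingFace (Γ : Set (ι → ENat)) (a : ι → ℕ) : Prop :=
  natFace a ∈ Γ ∧
  (∀ b ∈ facets (star Γ (natFace a)),
    IsStanleySet a (mcSpan {b} \ del Γ (natFace a))) ∧
  (∀ b ∈ facets (star Γ (natFace a)), ∀ c ∈ facets (del Γ (natFace a)),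
    fpt b ⊆ fpt c → fpt b = fpt c)

/-- `Γ` is a `k`-decomposable multicomplex. -/
inductive MCKDecomposable (k : ℕ) : Set (ι → ENat) → Prop
  | single (Γ : Set (ι → ENat)) (h : ∃! a, a ∈ facets Γ) : MCKDecomposable k Γ
  | shed (Γ : Set (ι → ENat)) (a : ι → ℕ)
      (ha : IsSheddingFace Γ a)
      (hcard : (fptStar (natFace a)).ncard ≤ k + 1)
      (h1 : MCKDecomposable k (link Γ (natFace a)))
      (h2 : MCKDecomposable k (del Γ (natFace a))) : MCKDecomposable k Γ

/-- `Γ` is a shellable multicomplex. -/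
def Shellable (Γ : Set (ι → ENat)) : Prop :=
  ∃ (r : ℕ) (a : Fin r → (ι → ENat)), Function.Injective a ∧ facets Γ = Set.range a ∧
    ∃ (b : Fin r → (ι → ℕ)) (m : Fin r → (ι → ENat)),
      (∀ i j, m i j = 0 ∨ m i j = ⊤) ∧
      (∀ i : Fin r, mcSpan {a i} \ mcSpan (a '' {j | j < i})
        = (fun c => natFace (b i) + c) '' mcSpan {m i}) ∧
      (∀ i j : Fin r, mcSpan {m i} ⊆ mcSpan {m j} →
        mcSpan {m i} = mcSpan {m j} ∨ j < i)

/-- the join of two multicomplexes. -/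
def mcJoin (Γ₁ Γ₂ : Set (ι → ENat)) : Set (ι → ENat) :=
  {c | ∃ a ∈ Γ₁, ∃ b ∈ Γ₂, c = a + b}

/-- two multicomplexes in `ℕ∞^n` are disjoint. -/
def mcDisjoint {n : ℕ} (Γ₁ Γ₂ : Set (Fin n → ENat)) : Prop :=
  ∃ m : ℕ, 1 < m ∧ m < n ∧
    (∀ a ∈ Γ₁, ∀ i : Fin n, m < (i : ℕ) + 1 → a i = 0) ∧
    (∀ a ∈ Γ₂, ∀ i : Fin n, (i : ℕ) + 1 ≤ m → a i = 0)

/-! ### Simplicial complexes -/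

variable {V : Type*} [DecidableEq V]

def IsSimplicialComplex (Δ : Set (Finset V)) : Prop :=
  ∀ s ∈ Δ, ∀ t ⊆ s, t ∈ Δ

def sFacets (Δ : Set (Finset V)) : Set (Finset V) :=
  {s | s ∈ Δ ∧ ∀ t ∈ Δ, s ⊆ t → s = t}

def sDel (Δ : Set (Finset V)) (s : Finset V) : Set (Finset V) :=
  {t | t ∈ Δ ∧ ¬ s ⊆ t}

def sLink (Δ : Set (Finset V)) (s : Finset V) : Set (Finset V) :=
  {t | t ∈ Δ ∧ t ∩ s = ∅ ∧ t ∪ s ∈ Δ}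

/-- `s` is a shedding face of `Δ`. -/
def sShedding (Δ : Set (Finset V)) (s : Finset V) : Prop :=
  ∀ t ∈ Δ, s ⊆ t → ∀ v ∈ s, ∃ w, w ∉ t ∧ (insert w t).erase v ∈ Δ

/-- `Δ` is a `k`-decomposable simplicial complex. -/
inductive SCKDecomposable (k : ℕ) : Set (Finset V) → Prop
  | simplex (s : Finset V) : SCKDecomposable k {t | t ⊆ s}
  | void : SCKDecomposable k (∅ : Set (Finset V))
  | empty : SCKDecomposable k ({∅} : Set (Finset V))
  | shed (Δ : Set (Finset V)) (s : Finset V) (hs : s ∈ Δ) (hcard : s.card ≤ k + 1)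
      (hshed : sShedding Δ s)
      (h1 : SCKDecomposable k (sDel Δ s))
      (h2 : SCKDecomposable k (sLink Δ s)) : SCKDecomposable k Δ

/-- the join of two simplicial complexes. -/
def sJoin (Δ₁ Δ₂ : Set (Finset V)) : Set (Finset V) :=
  {u | ∃ s ∈ Δ₁, ∃ t ∈ Δ₂, u = s ∪ t}

/-- `a_F`: the `{0,∞}`-vector of a subset `F ⊆ [n]`. -/
def faceOfFinset {n : ℕ} (F : Finset (Fin n)) : Fin n → ENat :=
  fun i => if i ∈ F then (⊤ : ENat) else 0

/-! ### The correspondence between multicomplexes and monomial ideals -/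

/-- `I(Γ)`: the monomial ideal associated to a multicomplex `Γ`. -/
def idealOf (K : Type*) [Field K] {σ : Type*} (Γ : Set (σ → ENat)) :
    Ideal (MvPolynomial σ K) :=
  Ideal.span {p | ∃ a : σ →₀ ℕ, natFace ⇑a ∉ Γ ∧ p = monomial a 1}

/-- `Γ(I)`: the multicomplex associated to a monomial ideal `I`. -/
def gammaOf {K : Type*} [Field K] {σ : Type*} (I : Ideal (MvPolynomial σ K)) :
    Set (σ → ENat) :=
  {c | ∀ b : σ →₀ ℕ, natFace ⇑b ≤ c → (monomial b 1 : MvPolynomial σ K) ∉ I}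

/-! ### Polarization -/

/-- the index type of the variables of the polarized ring. -/
abbrev polarType {n r : ℕ} (g : Fin r → (Fin n →₀ ℕ)) : Type :=
  (j : Fin n) × Fin (Finset.univ.sup fun i => g i j)

/-- the exponent vector of the polarization `v_i` of the generator `u_i = x^(g i)`. -/
def polarExp {n r : ℕ} (g : Fin r → (Fin n →₀ ℕ)) (i : Fin r) : polarType g →₀ ℕ :=
  Finsupp.equivFunOnFinite.symm fun p => if (p.2 : ℕ) < g i p.1 then 1 else 0

/-- the polarization `I^p` of the monomial ideal minimally generated by the `x^(g i)`. -/
def polarIdeal (K : Type*) [Field K] {n r : ℕ} (g : Fin r → (Fin n →₀ ℕ)) :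
    Ideal (MvPolynomial (polarType g) K) :=
  Ideal.span (Set.range fun i => (monomial (polarExp g i) 1 : MvPolynomial (polarType g) K))


/-! ### Auxiliary lemmas for Statement 12 -/

section Aux12

variable {n : ℕ} {k : ℕ}

lemma mem_mcSpan_singleton {b c : Fin n → ENat} : c ∈ mcSpan {b} ↔ c ≤ b := by
  simp [mcSpan]

lemma le_faceOfFinset {c : Fin n → ENat} {F : Finset (Fin n)} :
    c ≤ faceOfFinset F ↔ ∀ i, i ∉ F → c i = 0 := by
  constructor
  · intro h i hi
    have := h i
    simpa [faceOfFinset, hi] using this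
  · intro h i
    by_cases hi : i ∈ F
    · simp [faceOfFinset, hi]
    · simp [faceOfFinset, hi, h i hi]

lemma faceOfFinset_le_iff {F G : Finset (Fin n)} :
    faceOfFinset F ≤ faceOfFinset G ↔ F ⊆ G := by
  constructor
  · intro h i hi
    by_contra hG
    have := h i
    simp [faceOfFinset, hi, hG] at this
  · intro h i
    by_cases hi : i ∈ F
    · simp [faceOfFinset, hi, h hi]
    · simp [faceOfFinset, hi]

lemma faceOfFinset_inj {F G : Finset (Fin n)} (h : faceOfFinset F = faceOfFinset G) :
    F = G :=
  Finset.Subset.antisymm (faceOfFinset_le_iff.1 h.le) (faceOfFinset_le_iff.1 h.ge)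

lemma natFace_le_faceOfFinset {a : Fin n → ℕ} {F : Finset (Fin n)} :
    natFace a ≤ faceOfFinset F ↔ ∀ i, a i ≠ 0 → i ∈ F := by
  rw [le_faceOfFinset]
  constructor
  · intro h i hi
    by_contra hF
    exact hi (by simpa [natFace] using h i hF)
  · intro h i hi
    have : a i = 0 := by
      by_contra h0
      exact hi (h i h0)
    simp [natFace, this]

lemma faceOfFinset_sub (a : Fin n → ℕ) (F : Finset (Fin n)) :
    faceOfFinset F - natFace a = faceOfFinset F := by
  funext i
  by_cases hi : i ∈ F
  · simp [faceOfFinset, hi, natFace]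
  · simp [faceOfFinset, hi, zero_tsub]

lemma infpt_faceOfFinset (F : Finset (Fin n)) : infpt (faceOfFinset F) = ↑F := by
  ext i
  by_cases hi : i ∈ F <;> simp [infpt, faceOfFinset, hi]

lemma exists_facet (Λ : Set (Finset (Fin n))) {t : Finset (Fin n)} (ht : t ∈ Λ) :
    ∃ G ∈ sFacets Λ, t ⊆ G := by
  obtain ⟨G, hG, hmax⟩ := Set.Finite.exists_maximalFor Finset.card {u | u ∈ Λ ∧ t ⊆ u}
    (Set.toFinite _) ⟨t, ht, le_refl _⟩
  refine ⟨G, ⟨hG.1, ?_⟩, hG.2⟩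
  intro u hu hGu
  exact Finset.eq_of_subset_of_card_le hGu
    (hmax ⟨hu, hG.2.trans hGu⟩ (Finset.card_le_card hGu))

lemma facets_faceSpan {𝒜 : Set (Finset (Fin n))}
    (hA : ∀ F ∈ 𝒜, ∀ G ∈ 𝒜, F ⊆ G → F = G) :
    facets (mcSpan (faceOfFinset '' 𝒜)) = faceOfFinset '' 𝒜 := by
  have hmax : ∀ F ∈ 𝒜, faceOfFinset F ∈ maxElts (mcSpan (faceOfFinset '' 𝒜)) := by
    intro F hF
    refine ⟨⟨faceOfFinset F, ⟨F, hF, rfl⟩, le_refl _⟩, ?_⟩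
    rintro c ⟨b, ⟨G, hG, rfl⟩, hcb⟩ hFc
    have hFG : F ⊆ G := faceOfFinset_le_iff.1 (hFc.trans hcb)
    cases hA F hF G hG hFG
    exact le_antisymm hFc hcb
  ext aa
  constructor
  · rintro ⟨⟨b, ⟨G, hG, rfl⟩, hab⟩, hfacet⟩
    have hinf := hfacet _ (hmax G hG) hab
    rw [infpt_faceOfFinset] at hinf
    refine ⟨G, hG, ?_⟩
    funext i
    by_cases hi : i ∈ G
    · have : i ∈ infpt aa := by rw [hinf]; exact hi
      simp [faceOfFinset, hi]
      exact this.symm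
    · have h0 := hab i
      simp [faceOfFinset, hi] at h0 ⊢
      exact h0.symm
  · rintro ⟨G, hG, rfl⟩
    refine ⟨⟨_, ⟨G, hG, rfl⟩, le_refl _⟩, ?_⟩
    intro m hm hGm
    obtain ⟨⟨b, ⟨G', hG', rfl⟩, hmb⟩, -⟩ := hm
    have hsub : G ⊆ G' := faceOfFinset_le_iff.1 (hGm.trans hmb)
    cases hA G hG G' hG' hsub
    rw [le_antisymm hmb hGm]

lemma not_mck_empty : ¬ MCKDecomposable k (∅ : Set (Fin n → ENat)) := by
  intro h
  cases h with
  | single _ h =>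
    obtain ⟨a, ha, -⟩ := h
    exact ha.1
  | shed _ a ha _ _ _ => exact ha.1

lemma isSC_sDel {Λ : Set (Finset (Fin n))} (hΛ : IsSimplicialComplex Λ)
    (σ : Finset (Fin n)) : IsSimplicialComplex (sDel Λ σ) := by
  rintro t ⟨ht, hσt⟩ u hu
  exact ⟨hΛ t ht u hu, fun hσu => hσt (hσu.trans hu)⟩

lemma isSC_sLink {Λ : Set (Finset (Fin n))} (hΛ : IsSimplicialComplex Λ)
    (σ : Finset (Fin n)) : IsSimplicialComplex (sLink Λ σ) := by
  rintro t ⟨ht, htσ, htu⟩ u hu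
  refine ⟨hΛ t ht u hu, ?_, hΛ _ htu _ (Finset.union_subset_union hu subset_rfl)⟩
  rw [Finset.eq_empty_iff_forall_notMem] at htσ ⊢
  intro x hx
  rw [Finset.mem_inter] at hx
  exact htσ x (Finset.mem_inter.2 ⟨hu hx.1, hx.2⟩)

lemma subset_of_union_subset {G₁ G₂ s : Finset (Fin n)} (h1 : G₁ ∩ s = ∅)
    (h : G₁ ∪ s ⊆ G₂ ∪ s) : G₁ ⊆ G₂ := by
  intro x hx
  have hxs : x ∉ s := fun hs =>
    Finset.eq_empty_iff_forall_notMem.1 h1 x (Finset.mem_inter.2 ⟨hx, hs⟩)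
  rcases Finset.mem_union.1 (h (Finset.mem_union_left _ hx)) with h' | h'
  · exact h'
  · exact absurd h' hxs

lemma sFacets_sLink {Λ : Set (Finset (Fin n))} (hΛ : IsSimplicialComplex Λ)
    {σ : Finset (Fin n)} (hσ : σ ∈ Λ) :
    sFacets (sLink Λ σ) = (· \ σ) '' {G | G ∈ sFacets Λ ∧ σ ⊆ G} := by
  have hmem : ∀ G ∈ sFacets Λ, σ ⊆ G → G \ σ ∈ sLink Λ σ := by
    intro G hG hσG
    exact ⟨hΛ G hG.1 _ (Finset.sdiff_subset), Finset.sdiff_inter_self _ _,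
      by rw [Finset.sdiff_union_of_subset hσG]; exact hG.1⟩
  have hmax : ∀ G ∈ sFacets Λ, σ ⊆ G → ∀ u ∈ sLink Λ σ, G \ σ ⊆ u → G \ σ = u := by
    intro G hG hσG u hu hsub
    have hGu : G ⊆ u ∪ σ := by
      intro x hx
      by_cases hxσ : x ∈ σ
      · exact Finset.mem_union_right _ hxσ
      · exact Finset.mem_union_left _ (hsub (Finset.mem_sdiff.2 ⟨hx, hxσ⟩))
    have hGeq : G = u ∪ σ := hG.2 _ hu.2.2 hGu
    apply Finset.Subset.antisymm hsub
    intro x hx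
    refine Finset.mem_sdiff.2 ⟨hGeq ▸ Finset.mem_union_left _ hx, fun hxσ => ?_⟩
    exact Finset.eq_empty_iff_forall_notMem.1 hu.2.1 x (Finset.mem_inter.2 ⟨hx, hxσ⟩)
  ext t
  constructor
  · rintro ⟨ht, htmax⟩
    obtain ⟨G, hG, hsub⟩ := exists_facet Λ ht.2.2
    have hσG : σ ⊆ G := (Finset.subset_union_right).trans hsub
    have htG : t ⊆ G \ σ := by
      intro x hx
      refine Finset.mem_sdiff.2 ⟨hsub (Finset.mem_union_left _ hx), fun hxσ => ?_⟩
      exact Finset.eq_empty_iff_forall_notMem.1 ht.2.1 x (Finset.mem_inter.2 ⟨hx, hxσ⟩)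
    exact ⟨G, ⟨hG, hσG⟩, (htmax _ (hmem G hG hσG) htG).symm⟩
  · rintro ⟨G, ⟨hG, hσG⟩, rfl⟩
    exact ⟨hmem G hG hσG, hmax G hG hσG⟩

lemma insert_erase_aux {t : Finset (Fin n)} {v w : Fin n} (hvt : v ∈ t) (hwt : w ∉ t) :
    (insert w t).erase v = insert w (t.erase v) := by
  have hwv : w ≠ v := fun h => hwt (h ▸ hvt)
  ext x
  simp only [Finset.mem_erase, Finset.mem_insert]
  constructor
  · rintro ⟨hxv, hx | hx⟩
    · exact Or.inl hx
    · exact Or.inr ⟨hxv, hx⟩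
  · rintro (rfl | ⟨hxv, hx⟩)
    · exact ⟨hwv, Or.inl rfl⟩
    · exact ⟨hxv, Or.inr hx⟩

lemma sFacets_sDel {Λ : Set (Finset (Fin n))} (hΛ : IsSimplicialComplex Λ)
    {σ : Finset (Fin n)} (hshed : sShedding Λ σ) (hσne : σ.Nonempty) :
    sFacets (sDel Λ σ) = {G | G ∈ sFacets Λ ∧ ¬ σ ⊆ G} := by
  ext t
  constructor
  · rintro ⟨⟨ht, hσt⟩, htmax⟩
    obtain ⟨G, hG, hsub⟩ := exists_facet Λ ht
    by_cases hσG : σ ⊆ G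
    · exfalso
      have htne : t ≠ G := fun h => hσt (h ▸ hσG)
      obtain ⟨x, hxG, hxt⟩ := Finset.exists_of_ssubset (lt_of_le_of_ne hsub htne)
      have hu : insert x t ∈ Λ := hΛ G hG.1 _ (Finset.insert_subset hxG hsub)
      have hσu : σ ⊆ insert x t := by
        by_contra hc
        exact hxt ((htmax _ ⟨hu, hc⟩ (Finset.subset_insert _ _)) ▸ Finset.mem_insert_self x t)
      have hxσ : x ∈ σ := by
        by_contra hc
        refine hσt (fun y hy => ?_)
        rcases Finset.mem_insert.1 (hσu hy) with rfl | h
        · exact absurd hy hc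
        · exact h
      obtain ⟨w, hw, hw2⟩ := hshed _ hu hσu x hxσ
      have hxt' : x ∈ insert x t := Finset.mem_insert_self x t
      rw [insert_erase_aux hxt' hw, Finset.erase_insert hxt] at hw2
      have hwt : w ∉ t := fun h => hw (Finset.mem_insert_of_mem h)
      have hσw : ¬ σ ⊆ insert w t := by
        intro hc
        have hxW := hc hxσ
        rcases Finset.mem_insert.1 hxW with rfl | h
        · exact hw (Finset.mem_insert_self x t)
        · exact hxt h
      exact hwt ((htmax _ ⟨hw2, hσw⟩ (Finset.subset_insert _ _)) ▸ Finset.mem_insert_self w t)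
    · have : t = G := htmax G ⟨hG.1, hσG⟩ hsub
      exact this ▸ ⟨hG, hσG⟩
  · rintro ⟨hG, hσG⟩
    exact ⟨⟨hG.1, hσG⟩, fun u hu hsub => hG.2 u hu.1 hsub⟩

/-- the multicomplex generated by the faces `a_{G ∪ s}`, `G ∈ 𝒜`. -/
def faceSpan (𝒜 : Set (Finset (Fin n))) (s : Finset (Fin n)) : Set (Fin n → ENat) :=
  mcSpan (faceOfFinset '' ((· ∪ s) '' 𝒜))

lemma filter_faceImage (𝒜 : Set (Finset (Fin n))) (s : Finset (Fin n))
    (P : (Fin n → ENat) → Prop) :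
    {b | b ∈ faceOfFinset '' ((· ∪ s) '' 𝒜) ∧ P b}
      = faceOfFinset '' ((· ∪ s) '' {G | G ∈ 𝒜 ∧ P (faceOfFinset (G ∪ s))}) := by
  ext b
  constructor
  · rintro ⟨⟨c, ⟨G, hG, rfl⟩, rfl⟩, hP⟩
    exact ⟨_, ⟨G, ⟨hG, hP⟩, rfl⟩, rfl⟩
  · rintro ⟨c, ⟨G, ⟨hG, hP⟩, rfl⟩, rfl⟩
    exact ⟨⟨_, ⟨G, hG, rfl⟩, rfl⟩, hP⟩

lemma mem_faceSpan {𝒜 : Set (Finset (Fin n))} {s : Finset (Fin n)} {c : Fin n → ENat} :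
    c ∈ faceSpan 𝒜 s ↔ ∃ G ∈ 𝒜, c ≤ faceOfFinset (G ∪ s) := by
  constructor
  · rintro ⟨b, ⟨d, ⟨G, hG, rfl⟩, rfl⟩, hc⟩
    exact ⟨G, hG, hc⟩
  · rintro ⟨G, hG, hc⟩
    exact ⟨_, ⟨_, ⟨G, hG, rfl⟩, rfl⟩, hc⟩

lemma antichain_transfer {Λ : Set (Finset (Fin n))} {s : Finset (Fin n)}
    (hdis : ∀ t ∈ Λ, t ∩ s = ∅) :
    ∀ F ∈ (· ∪ s) '' sFacets Λ, ∀ G ∈ (· ∪ s) '' sFacets Λ, F ⊆ G → F = G := by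
  rintro F ⟨G₁, hG₁, rfl⟩ G ⟨G₂, hG₂, rfl⟩ hsub
  rw [hG₁.2 G₂ hG₂.1 (subset_of_union_subset (hdis _ hG₁.1) hsub)]

lemma facets_faceSpan_sFacets {Λ : Set (Finset (Fin n))} {s : Finset (Fin n)}
    (hdis : ∀ t ∈ Λ, t ∩ s = ∅) :
    facets (faceSpan (sFacets Λ) s) = faceOfFinset '' ((· ∪ s) '' sFacets Λ) := by
  rw [faceSpan, facets_faceSpan (antichain_transfer hdis)]

lemma star_faceSpan {Λ : Set (Finset (Fin n))} {s : Finset (Fin n)}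
    (hdis : ∀ t ∈ Λ, t ∩ s = ∅) (a : Fin n → ℕ) :
    star (faceSpan (sFacets Λ) s) (natFace a)
      = faceSpan {G | G ∈ sFacets Λ ∧ natFace a ≤ faceOfFinset (G ∪ s)} s := by
  rw [star, facets_faceSpan_sFacets hdis, faceSpan]
  exact congrArg mcSpan (filter_faceImage _ _ _)

lemma del_faceSpan {Λ : Set (Finset (Fin n))} {s : Finset (Fin n)}
    (hdis : ∀ t ∈ Λ, t ∩ s = ∅) (a : Fin n → ℕ) :
    del (faceSpan (sFacets Λ) s) (natFace a)
      = faceSpan {G | G ∈ sFacets Λ ∧ ¬ natFace a ≤ faceOfFinset (G ∪ s)} s := by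
  rw [del, facets_faceSpan_sFacets hdis, faceSpan]
  exact congrArg mcSpan (filter_faceImage _ _ _)

lemma link_faceSpan {Λ : Set (Finset (Fin n))} {s : Finset (Fin n)}
    (hdis : ∀ t ∈ Λ, t ∩ s = ∅) (a : Fin n → ℕ) :
    link (faceSpan (sFacets Λ) s) (natFace a)
      = faceSpan {G | G ∈ sFacets Λ ∧ natFace a ≤ faceOfFinset (G ∪ s)} s := by
  rw [link, facets_faceSpan_sFacets hdis, filter_faceImage, faceSpan]
  rw [Set.image_image, Set.image_image, Set.image_image]
  exact congrArg mcSpan (Set.image_congr fun G _ => faceOfFinset_sub a (G ∪ s))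

lemma mcSpan_empty : mcSpan (∅ : Set (Fin n → ENat)) = ∅ := by
  ext c
  simp [mcSpan]

/-- the indicator vector of `σ`. -/
def indNat (σ : Finset (Fin n)) : Fin n → ℕ := fun i => if i ∈ σ then 1 else 0

lemma indNat_le_iff {σ F : Finset (Fin n)} :
    natFace (indNat σ) ≤ faceOfFinset F ↔ σ ⊆ F := by
  rw [natFace_le_faceOfFinset]
  constructor
  · intro h i hi
    exact h i (by simp [indNat, hi])
  · intro h i hi
    by_contra hF
    have hiσ : i ∉ σ := fun hs => hF (h hs)
    exact hi (by simp [indNat, hiσ])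

lemma fptStar_natFace (a : Fin n → ℕ) :
    fptStar (natFace a) = ↑(Finset.univ.filter fun i => a i ≠ 0) := by
  ext i
  simp [fptStar, natFace]

lemma ncard_fptStar (a : Fin n → ℕ) :
    (fptStar (natFace a)).ncard = (Finset.univ.filter fun i => a i ≠ 0).card := by
  rw [fptStar_natFace, Set.ncard_coe_finset]

lemma add_span_eq {a : Fin n → ℕ} {F : Finset (Fin n)}
    (h : natFace a ≤ faceOfFinset F) :
    (fun b => natFace a + b) '' mcSpan {faceOfFinset F}
      = {c | natFace a ≤ c ∧ c ≤ faceOfFinset F} := by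
  ext c
  constructor
  · rintro ⟨d, hd, rfl⟩
    rw [mem_mcSpan_singleton] at hd
    refine ⟨fun i => le_self_add, ?_⟩
    rw [le_faceOfFinset] at *
    intro i hi
    have h1 : natFace a i = 0 := h i hi
    have h2 : d i = 0 := hd i hi
    show natFace a i + d i = 0
    rw [h1, h2, add_zero]
  · rintro ⟨hac, hcF⟩
    refine ⟨c - natFace a, mem_mcSpan_singleton.2 (le_trans (fun i => tsub_le_self) hcF), ?_⟩
    funext i
    show natFace a i + (c i - natFace a i) = c i
    exact add_tsub_cancel_of_le (hac i)

lemma indNat_le_union_iff {σ G s : Finset (Fin n)} (hσs : σ ∩ s = ∅) :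
    natFace (indNat σ) ≤ faceOfFinset (G ∪ s) ↔ σ ⊆ G := by
  rw [indNat_le_iff]
  constructor
  · intro h x hx
    rcases Finset.mem_union.1 (h hx) with h' | h'
    · exact h'
    · exact absurd (Finset.mem_inter.2 ⟨hx, h'⟩) (by rw [hσs]; exact Finset.notMem_empty x)
  · exact fun h => h.trans Finset.subset_union_left

lemma facets_faceSpan_sub {Λ : Set (Finset (Fin n))} {s : Finset (Fin n)}
    (hdis : ∀ t ∈ Λ, t ∩ s = ∅) (P : Finset (Fin n) → Prop) :
    facets (faceSpan {G | G ∈ sFacets Λ ∧ P G} s)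
      = faceOfFinset '' ((· ∪ s) '' {G | G ∈ sFacets Λ ∧ P G}) := by
  apply facets_faceSpan
  rintro F ⟨G₁, ⟨h1, -⟩, rfl⟩ G ⟨G₂, ⟨h2, -⟩, rfl⟩ hsub
  rw [h1.2 G₂ h2.1 (subset_of_union_subset (hdis _ h1.1) hsub)]

lemma sdiff_union_union {G σ s : Finset (Fin n)} (h : σ ⊆ G) :
    (G \ σ) ∪ (s ∪ σ) = G ∪ s := by
  ext x
  by_cases hxσ : x ∈ σ
  · simp [Finset.mem_sdiff, Finset.mem_union, hxσ, h hxσ]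
  · simp [Finset.mem_sdiff, Finset.mem_union, hxσ]

lemma filter_indNat (σ : Finset (Fin n)) :
    (Finset.univ.filter fun i => indNat σ i ≠ 0) = σ := by
  ext i
  simp [indNat]

lemma mck_faceSpan_singleton (G0 s : Finset (Fin n)) :
    MCKDecomposable k (faceSpan {G0} s) := by
  apply MCKDecomposable.single
  have h : facets (faceSpan {G0} s) = {faceOfFinset (G0 ∪ s)} := by
    rw [faceSpan, Set.image_singleton,
      facets_faceSpan (by rintro F rfl G rfl _; rfl), Set.image_singleton]
  rw [h]
  exact ⟨faceOfFinset (G0 ∪ s), rfl, fun y hy => hy⟩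

lemma linkeq_aux {Λ : Set (Finset (Fin n))} (hΛ : IsSimplicialComplex Λ)
    {σ : Finset (Fin n)} (hσ : σ ∈ Λ) (s : Finset (Fin n)) :
    faceSpan (sFacets (sLink Λ σ)) (s ∪ σ) = faceSpan {G | G ∈ sFacets Λ ∧ σ ⊆ G} s := by
  rw [sFacets_sLink hΛ hσ, faceSpan, faceSpan]
  refine congrArg mcSpan ?_
  simp only [Set.image_image]
  exact Set.image_congr fun G hG => congrArg faceOfFinset (sdiff_union_union hG.2)

lemma forwardAux {Λ : Set (Finset (Fin n))} (h : SCKDecomposable k Λ) :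
    ∀ s : Finset (Fin n), IsSimplicialComplex Λ → (∀ t ∈ Λ, t ∩ s = ∅) → Λ.Nonempty →
      MCKDecomposable k (faceSpan (sFacets Λ) s) := by
  induction h with
  | simplex s0 =>
    intro s _ _ _
    have hfac : sFacets {t : Finset (Fin n) | t ⊆ s0} = {s0} := by
      ext t
      constructor
      · rintro ⟨ht, hmax⟩
        exact hmax s0 (Set.mem_setOf.mpr subset_rfl) ht
      · rintro rfl
        exact ⟨Set.mem_setOf.mpr subset_rfl, fun u hu hsu => Finset.Subset.antisymm hsu hu⟩
    rw [hfac]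
    exact mck_faceSpan_singleton s0 s
  | void =>
    intro s _ _ hne
    obtain ⟨t, ht⟩ := hne
    exact absurd ht (Set.notMem_empty t)
  | empty =>
    intro s _ _ _
    have hfac : sFacets ({∅} : Set (Finset (Fin n))) = {∅} := by
      ext t
      constructor
      · rintro ⟨ht, -⟩
        exact ht
      · rintro rfl
        exact ⟨rfl, fun u hu _ => hu.symm⟩
    rw [hfac]
    exact mck_faceSpan_singleton ∅ s
  | shed Δ σ hσΔ hcard hshed h1 h2 ih1 ih2 =>
    intro s hΛ hdis hne
    by_cases hσe : σ = ∅
    · subst hσe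
      have hlink : sLink Δ ∅ = Δ := by
        ext t
        simp [sLink]
      have := ih2 s
      rw [hlink] at this
      exact this hΛ hdis hne
    -- main case : σ ≠ ∅
    have hσne : σ.Nonempty := Finset.nonempty_iff_ne_empty.2 hσe
    have hσs : σ ∩ s = ∅ := hdis σ hσΔ
    have hEmem : (∅ : Finset (Fin n)) ∈ Δ := by
      obtain ⟨t0, ht0⟩ := hne
      exact hΛ t0 ht0 ∅ (Finset.empty_subset t0)
    have hsetstar : {G | G ∈ sFacets Δ ∧ natFace (indNat σ) ≤ faceOfFinset (G ∪ s)}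
        = {G | G ∈ sFacets Δ ∧ σ ⊆ G} := by
      ext G
      simp only [Set.mem_setOf_eq, indNat_le_union_iff hσs]
    have hsetdel : {G | G ∈ sFacets Δ ∧ ¬ natFace (indNat σ) ≤ faceOfFinset (G ∪ s)}
        = {G | G ∈ sFacets Δ ∧ ¬ σ ⊆ G} := by
      ext G
      simp only [Set.mem_setOf_eq, indNat_le_union_iff hσs]
    have hstar := star_faceSpan hdis (indNat σ)
    rw [hsetstar] at hstar
    have hdel := del_faceSpan hdis (indNat σ)
    rw [hsetdel] at hdel
    have hlink := link_faceSpan hdis (indNat σ)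
    rw [hsetstar] at hlink
    have hstarfac : facets (star (faceSpan (sFacets Δ) s) (natFace (indNat σ)))
        = faceOfFinset '' ((· ∪ s) '' {G | G ∈ sFacets Δ ∧ σ ⊆ G}) := by
      rw [hstar]
      exact facets_faceSpan_sub hdis _
    have hdelfac : facets (del (faceSpan (sFacets Δ) s) (natFace (indNat σ)))
        = faceOfFinset '' ((· ∪ s) '' {G | G ∈ sFacets Δ ∧ ¬ σ ⊆ G}) := by
      rw [hdel]
      exact facets_faceSpan_sub hdis _
    -- the extension argument provided by the shedding property
    have hext : ∀ G ∈ sFacets Δ, σ ⊆ G → ∀ v ∈ σ, ∃ G' ∈ sFacets Δ,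
        ¬ σ ⊆ G' ∧ G.erase v ⊆ G' := by
      intro G hG hσG v hv
      obtain ⟨w, hw, hw2⟩ := hshed G hG.1 hσG v hv
      have hvG : v ∈ G := hσG hv
      rw [insert_erase_aux hvG hw] at hw2
      obtain ⟨G', hG', hsub⟩ := exists_facet Δ hw2
      have hvG' : v ∉ G' := by
        intro hvG'
        have hGsub : G ⊆ G' := by
          intro x hx
          by_cases hxv : x = v
          · exact hxv ▸ hvG'
          · exact hsub (Finset.mem_insert_of_mem (Finset.mem_erase.2 ⟨hxv, hx⟩))
        have hGeq : G = G' := hG.2 G' hG'.1 hGsub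
        rw [← hGeq] at hsub
        exact hw (hsub (Finset.mem_insert_self w _))
      exact ⟨G', hG', fun hc => hvG' (hc hv),
        fun x hx => hsub (Finset.mem_insert_of_mem hx)⟩
    -- shedding face in the multicomplex
    have hSF : IsSheddingFace (faceSpan (sFacets Δ) s) (indNat σ) := by
      refine ⟨?_, ?_, ?_⟩
      · obtain ⟨G₁, hG₁, hσG₁⟩ := exists_facet Δ hσΔ
        exact mem_faceSpan.2 ⟨G₁, hG₁,
          indNat_le_iff.2 (hσG₁.trans Finset.subset_union_left)⟩
      · rw [hstarfac]
        rintro b ⟨F, ⟨G, ⟨hG, hσG⟩, rfl⟩, rfl⟩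
        refine ⟨faceOfFinset (G ∪ s), fun i => ?_, ?_⟩
        · by_cases hi : i ∈ G ∪ s <;> simp [faceOfFinset, hi]
        · rw [add_span_eq (indNat_le_iff.2 (hσG.trans Finset.subset_union_left)), hdel]
          ext c
          constructor
          · rintro ⟨hcb, hcdel⟩
            rw [mem_mcSpan_singleton] at hcb
            refine ⟨?_, hcb⟩
            by_contra hcon
            rw [Pi.le_def] at hcon
            push_neg at hcon
            obtain ⟨v, hv⟩ := hcon
            have hvσ : v ∈ σ := by
              by_contra hvσ
              have : natFace (indNat σ) v = 0 := by simp [natFace, indNat, hvσ]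
              rw [this] at hv
              exact (not_lt_of_ge zero_le) hv
            have hcv : c v = 0 := by
              have h1 : natFace (indNat σ) v = 1 := by simp [natFace, indNat, hvσ]
              rw [h1] at hv
              by_contra h0
              exact (not_le_of_gt hv) (ENat.one_le_iff_ne_zero.2 h0)
            obtain ⟨G', hG', hσG', hGsub⟩ := hext G hG hσG v hvσ
            apply hcdel
            refine mem_faceSpan.2 ⟨G', ⟨hG', hσG'⟩, le_faceOfFinset.2 fun i hi => ?_⟩
            by_cases hiGs : i ∈ G ∪ s
            · rcases Finset.mem_union.1 hiGs with hiG | his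
              · by_cases hiv : i = v
                · exact hiv ▸ hcv
                · exact absurd (Finset.mem_union_left _
                    (hGsub (Finset.mem_erase.2 ⟨hiv, hiG⟩))) hi
              · exact absurd (Finset.mem_union_right _ his) hi
            · exact le_faceOfFinset.1 hcb i hiGs
          · rintro ⟨hac, hcb⟩
            refine ⟨mem_mcSpan_singleton.2 hcb, fun hcdel => ?_⟩
            obtain ⟨G', hG', hcle⟩ := mem_faceSpan.1 hcdel
            obtain ⟨v, hvσ, hvG'⟩ := Finset.not_subset.1 hG'.2
            have hvs : v ∉ s := fun hvs =>
              (Finset.eq_empty_iff_forall_notMem.1 hσs v) (Finset.mem_inter.2 ⟨hvσ, hvs⟩)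
            have h0 : c v = 0 := le_faceOfFinset.1 hcle v (by
              simp [Finset.mem_union, hvG', hvs])
            have h1 : (1 : ENat) ≤ c v := by
              refine le_trans (le_of_eq ?_) (hac v)
              simp [natFace, indNat, hvσ]
            rw [h0] at h1
            simp at h1
      · rw [hstarfac, hdelfac]
        rintro b ⟨F, ⟨G, ⟨hG, hσG⟩, rfl⟩, rfl⟩ c ⟨F', ⟨G', ⟨hG', hσG'⟩, rfl⟩, rfl⟩ hfpt
        exfalso
        have hsub : G' ∪ s ⊆ G ∪ s := by
          intro x hx
          by_contra hxG
          have hxfpt : x ∈ fpt (faceOfFinset (G ∪ s)) := by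
            show faceOfFinset (G ∪ s) x ≠ ⊤
            simp [faceOfFinset, hxG]
          have hx' : faceOfFinset (G' ∪ s) x ≠ ⊤ := hfpt hxfpt
          exact hx' (by simp [faceOfFinset, hx])
        have hGeq : G' = G := hG'.2 G hG.1 (subset_of_union_subset (hdis _ hG'.1) hsub)
        rw [hGeq] at hσG'
        exact hσG' hσG
    refine MCKDecomposable.shed _ (indNat σ) hSF ?_ ?_ ?_
    · rw [ncard_fptStar, filter_indNat]
      exact hcard
    · -- link
      rw [hlink, ← linkeq_aux hΛ hσΔ s]
      refine ih2 (s ∪ σ) (isSC_sLink hΛ σ) ?_ ?_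
      · rintro t ⟨ht, htσ, -⟩
        rw [Finset.inter_union_distrib_left, hdis t ht, htσ, Finset.union_empty]
      · exact ⟨∅, hΛ σ hσΔ ∅ (Finset.empty_subset σ), Finset.empty_inter σ,
          by rw [Finset.empty_union]; exact hσΔ⟩
    · -- deletion
      rw [hdel, ← sFacets_sDel hΛ hshed hσne]
      refine ih1 s (isSC_sDel hΛ σ) (fun t ht => hdis t ht.1) ?_
      exact ⟨∅, hEmem, fun hc => hσe (Finset.subset_empty.1 hc)⟩

lemma natFace_le_union_iff {a : Fin n → ℕ} {G s : Finset (Fin n)} :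
    natFace a ≤ faceOfFinset (G ∪ s)
      ↔ (Finset.univ.filter fun i => a i ≠ 0) \ s ⊆ G := by
  rw [natFace_le_faceOfFinset]
  constructor
  · intro h x hx
    rw [Finset.mem_sdiff, Finset.mem_filter] at hx
    rcases Finset.mem_union.1 (h x hx.1.2) with h' | h'
    · exact h'
    · exact absurd h' hx.2
  · intro h i hi
    by_cases his : i ∈ s
    · exact Finset.mem_union_right _ his
    · exact Finset.mem_union_left _
        (h (Finset.mem_sdiff.2 ⟨Finset.mem_filter.2 ⟨Finset.mem_univ i, hi⟩, his⟩))

lemma faceSpan_empty (s : Finset (Fin n)) : faceSpan (∅ : Set (Finset (Fin n))) s = ∅ := by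
  rw [faceSpan, Set.image_empty, Set.image_empty, mcSpan_empty]

lemma backwardAux {Γ : Set (Fin n → ENat)} (h : MCKDecomposable k Γ) :
    ∀ (Λ : Set (Finset (Fin n))) (s : Finset (Fin n)), IsSimplicialComplex Λ →
      (∀ t ∈ Λ, t ∩ s = ∅) → Λ.Nonempty → Γ = faceSpan (sFacets Λ) s →
      SCKDecomposable k Λ := by
  induction h with
  | single Γ huniq =>
    intro Λ s hΛ hdis hne hEq
    subst hEq
    obtain ⟨t0, ht0⟩ := hne
    obtain ⟨G0, hG0, -⟩ := exists_facet Λ ht0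
    have hfac := facets_faceSpan_sFacets hdis
    obtain ⟨u, hu, huniq'⟩ := huniq
    have hG0u : faceOfFinset (G0 ∪ s) = u :=
      huniq' _ (by rw [hfac]; exact ⟨_, ⟨G0, hG0, rfl⟩, rfl⟩)
    have hall : ∀ G ∈ sFacets Λ, G = G0 := by
      intro G hG
      have hGu : faceOfFinset (G ∪ s) = u :=
        huniq' _ (by rw [hfac]; exact ⟨_, ⟨G, hG, rfl⟩, rfl⟩)
      have hun : G ∪ s = G0 ∪ s := faceOfFinset_inj (hGu.trans hG0u.symm)
      exact Finset.Subset.antisymm (subset_of_union_subset (hdis _ hG.1) hun.le)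
        (subset_of_union_subset (hdis _ hG0.1) hun.ge)
    have hΛeq : Λ = {t | t ⊆ G0} := by
      ext t
      constructor
      · intro ht
        obtain ⟨G, hG, hsub⟩ := exists_facet Λ ht
        exact Set.mem_setOf.mpr ((hall G hG) ▸ hsub)
      · intro ht
        exact hΛ G0 hG0.1 t ht
    rw [hΛeq]
    exact SCKDecomposable.simplex G0
  | shed Γ a ha hcard h1 h2 ih1 ih2 =>
    intro Λ s hΛ hdis hne hEq
    subst hEq
    set σ0 : Finset (Fin n) := Finset.univ.filter fun i => a i ≠ 0 with hσ0
    set σ : Finset (Fin n) := σ0 \ s with hσdef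
    have hiff : ∀ G : Finset (Fin n), natFace a ≤ faceOfFinset (G ∪ s) ↔ σ ⊆ G := by
      intro G
      rw [natFace_le_union_iff, hσdef, hσ0]
    have hEmem : (∅ : Finset (Fin n)) ∈ Λ := by
      obtain ⟨t0, ht0⟩ := hne
      exact hΛ t0 ht0 ∅ (Finset.empty_subset t0)
    -- σ is a face of Λ
    obtain ⟨G₁, hG₁, hleG₁⟩ := mem_faceSpan.1 ha.1
    have hσG₁ : σ ⊆ G₁ := (hiff G₁).1 hleG₁
    have hσΛ : σ ∈ Λ := hΛ G₁ hG₁.1 σ hσG₁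
    -- computations of star / del / link
    have hsetstar : {G | G ∈ sFacets Λ ∧ natFace a ≤ faceOfFinset (G ∪ s)}
        = {G | G ∈ sFacets Λ ∧ σ ⊆ G} := by
      ext G
      simp only [Set.mem_setOf_eq, hiff]
    have hsetdel : {G | G ∈ sFacets Λ ∧ ¬ natFace a ≤ faceOfFinset (G ∪ s)}
        = {G | G ∈ sFacets Λ ∧ ¬ σ ⊆ G} := by
      ext G
      simp only [Set.mem_setOf_eq, hiff]
    have hstar := star_faceSpan hdis a
    rw [hsetstar] at hstar
    have hdelC := del_faceSpan hdis a
    rw [hsetdel] at hdelC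
    have hlinkC := link_faceSpan hdis a
    rw [hsetstar] at hlinkC
    have hstarfac : facets (star (faceSpan (sFacets Λ) s) (natFace a))
        = faceOfFinset '' ((· ∪ s) '' {G | G ∈ sFacets Λ ∧ σ ⊆ G}) := by
      rw [hstar]
      exact facets_faceSpan_sub hdis _
    -- σ is nonempty
    have hσne : σ.Nonempty := by
      rw [Finset.nonempty_iff_ne_empty]
      intro hc
      apply not_mck_empty (n := n) (k := k)
      have hempty : {G | G ∈ sFacets Λ ∧ ¬ σ ⊆ G} = ∅ := by
        ext G
        simp [hc]
      rw [hdelC, hempty, faceSpan_empty] at h2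
      exact h2
    -- the key consequence of the Stanley set condition
    have hkey : ∀ (c : Fin n → ENat) (G : Finset (Fin n)), G ∈ sFacets Λ → σ ⊆ G →
        c ≤ faceOfFinset (G ∪ s) → (∃ v ∈ σ, c v = 0) →
        ∃ G' ∈ sFacets Λ, ¬ σ ⊆ G' ∧ c ≤ faceOfFinset (G' ∪ s) := by
      intro c G hG hσG hcle hv0
      obtain ⟨v, hvσ, hcv⟩ := hv0
      by_cases hcdel : c ∈ del (faceSpan (sFacets Λ) s) (natFace a)
      · rw [hdelC] at hcdel
        obtain ⟨G', hG', hle⟩ := mem_faceSpan.1 hcdel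
        exact ⟨G', hG'.1, hG'.2, hle⟩
      · exfalso
        have hb : faceOfFinset (G ∪ s)
            ∈ facets (star (faceSpan (sFacets Λ) s) (natFace a)) := by
          rw [hstarfac]
          exact ⟨_, ⟨G, ⟨hG, hσG⟩, rfl⟩, rfl⟩
        obtain ⟨m, -, hset⟩ := ha.2.1 _ hb
        have hc : c ∈ mcSpan {faceOfFinset (G ∪ s)}
            \ del (faceSpan (sFacets Λ) s) (natFace a) :=
          ⟨mem_mcSpan_singleton.2 hcle, hcdel⟩
        rw [hset] at hc
        obtain ⟨d, -, hcd⟩ := hc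
        have hcd' : natFace a + d = c := hcd
        have hle0 : natFace a v ≤ c v := by
          rw [← hcd']
          exact le_self_add
        rw [hcv] at hle0
        have hz : natFace a v = 0 := le_antisymm hle0 zero_le
        have hav : a v ≠ 0 := by
          have hm := Finset.mem_sdiff.1 hvσ
          exact (Finset.mem_filter.1 hm.1).2
        exact hav (by simpa [natFace] using hz)
    -- σ is a shedding face of Λ
    have hshedΛ : sShedding Λ σ := by
      intro t ht hσt v hv
      obtain ⟨G, hG, hsub⟩ := exists_facet Λ ht
      have hσG : σ ⊆ G := hσt.trans hsub
      have hcle : faceOfFinset ((t ∪ s).erase v) ≤ faceOfFinset (G ∪ s) :=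
        faceOfFinset_le_iff.2 ((Finset.erase_subset _ _).trans
          (Finset.union_subset_union hsub subset_rfl))
      have hcv : faceOfFinset ((t ∪ s).erase v) v = 0 := by
        simp [faceOfFinset, Finset.notMem_erase]
      obtain ⟨G', hG', hσG', hle⟩ := hkey _ G hG hσG hcle ⟨v, hv, hcv⟩
      have hsub' : (t ∪ s).erase v ⊆ G' ∪ s := faceOfFinset_le_iff.1 hle
      have htG' : t.erase v ⊆ G' := by
        intro x hx
        have hx' := Finset.mem_erase.1 hx
        have hxm : x ∈ G' ∪ s :=
          hsub' (Finset.mem_erase.2 ⟨hx'.1, Finset.mem_union_left _ hx'.2⟩)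
        rcases Finset.mem_union.1 hxm with h' | h'
        · exact h'
        · exact absurd (Finset.mem_inter.2 ⟨hx'.2, h'⟩)
            (by rw [hdis t ht]; exact Finset.notMem_empty x)
      have hG't : ¬ G' ⊆ t := by
        intro hc
        have heq : G' = t := hG'.2 t ht hc
        rw [heq] at hσG'
        exact hσG' hσt
      obtain ⟨w, hwG', hwt⟩ := Finset.not_subset.1 hG't
      refine ⟨w, hwt, ?_⟩
      have hvt : v ∈ t := hσt hv
      rw [insert_erase_aux hvt hwt]
      exact hΛ G' hG'.1 _ (Finset.insert_subset hwG' htG')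
    have hdelfacets := sFacets_sDel hΛ hshedΛ hσne
    have hcard' : σ.card ≤ k + 1 := by
      rw [ncard_fptStar, ← hσ0] at hcard
      exact le_trans (Finset.card_le_card (hσdef ▸ Finset.sdiff_subset)) hcard
    refine SCKDecomposable.shed Λ σ hσΛ hcard' hshedΛ ?_ ?_
    · -- deletion, from h2 / ih2
      refine ih2 (sDel Λ σ) s (isSC_sDel hΛ σ) (fun t ht => hdis t ht.1)
        ⟨∅, hEmem, fun hc =>
          (Finset.nonempty_iff_ne_empty.1 hσne) (Finset.subset_empty.1 hc)⟩ ?_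
      rw [hdelC, hdelfacets]
    · -- link, from h1 / ih1
      refine ih1 (sLink Λ σ) (s ∪ σ) (isSC_sLink hΛ σ) ?_ ?_ ?_
      · rintro t ⟨ht, htσ, -⟩
        rw [Finset.inter_union_distrib_left, hdis t ht, htσ, Finset.union_empty]
      · exact ⟨∅, hΛ σ hσΛ ∅ (Finset.empty_subset σ), Finset.empty_inter σ,
          by rw [Finset.empty_union]; exact hσΛ⟩
      · rw [hlinkC, ← linkeq_aux hΛ hσΛ s]

lemma multicomplex_eq_span_facets {Γ : Set (Fin n → ENat)} (hΓ : IsMulticomplex Γ) :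
    Γ = mcSpan (facets Γ) := by
  apply Set.Subset.antisymm
  · intro a haΓ
    obtain ⟨m, hmΓ, ham, hmax⟩ := hΓ.2 a haΓ
    refine ⟨m, ⟨hmΓ, ?_⟩, ham⟩
    intro m' hm' hmm'
    rw [hmax m' hm'.1 hmm']
  · rintro c ⟨b, hb, hcb⟩
    exact hΓ.1 b hb.1 c hcb

end Aux12

/-- a simplicial complex `Δ` is `k`-decomposable iff the multicomplex `Γ`
whose facets are the `a_F`, `F` a facet of `Δ`, is `k`-decomposable. -/
theorem scKDecomposable_iff_mcKDecomposable {n : ℕ} (k : ℕ)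
    (Δ : Set (Finset (Fin n))) (hΔ : IsSimplicialComplex Δ)
    (hne : (sFacets Δ).Nonempty)
    (Γ : Set (Fin n → ENat)) (hΓ : IsMulticomplex Γ)
    (hfac : facets Γ = faceOfFinset '' sFacets Δ) :
    SCKDecomposable k Δ ↔ MCKDecomposable k Γ := by
  have hspan : Γ = faceSpan (sFacets Δ) ∅ := by
    rw [multicomplex_eq_span_facets hΓ, hfac, faceSpan]
    have himg : (fun x => x ∪ ∅) '' sFacets Δ = sFacets Δ := by
      rw [Set.image_congr fun G _ => Finset.union_empty G]
      exact Set.image_id _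
    rw [himg]
  have hΔne : Δ.Nonempty := by
    obtain ⟨F, hF⟩ := hne
    exact ⟨F, hF.1⟩
  have hdis : ∀ t ∈ Δ, t ∩ (∅ : Finset (Fin n)) = ∅ := fun t _ => Finset.inter_empty t
  constructor
  · intro h
    rw [hspan]
    exact forwardAux h ∅ hΔ hdis hΔne
  · intro h
    exact backwardAux h Δ ∅ hΔ hdis hΔne hspan

end Arxiv1703
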